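/- arXiv:1603.04324 — 2 statements merged into one kernel-verified Lean document; each statement's English description precedes it below -/
import Mathlib

section
/- Let k be an algebraically closed field of characteristic 0, let r ≥ 2, and let G = ⟨(1/r)(a₁,…,aₙ)⟩ ⊂ SL(n,k) be the finite cyclic subgroup of order r generated by the diagonal matrix g = diag(ξ^{a₁},…,ξ^{aₙ}). If G embeds into SL(n₁,k) × SL(n₂,k) for some integers n₁, n₂ ≥ 1 with n₁ + n₂ = n, then at least one of the following holds: (a) r divides aᵢ for some i (equivalently, some generator of G has a zero exponent); or (b) r divides no aᵢ, and for every integer u with gcd(u,r) = 1 the exponents bᵢ := (u·aᵢ) mod r of the generator gᵘ satisfy 0 < bᵢ < r for all i and b₁ + ⋯ + bₙ > r. -/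
open Matrix Finset

/-- A subset `G` of the matrices `Matrix (Fin n) (Fin n) k` (thought of as a subgroup of
`SL(n, k)`) *embeds into* `SL(n₁, k) × SL(n₂, k)` (where `n₁ + n₂ = n`) if there is an
invertible matrix `P` conjugating every element of `G` into a block-diagonal matrix whose
two diagonal blocks have determinant `1`. -/
def EmbedsIntoProdSL (k : Type) [Field k] {n : ℕ} (n₁ n₂ : ℕ) (hn : n₁ + n₂ = n)
    (G : Set (Matrix (Fin n) (Fin n) k)) : Prop :=
  ∃ P : Matrix (Fin n) (Fin n) k, IsUnit P ∧
    ∀ h ∈ G, ∃ (h₁ : Matrix (Fin n₁) (Fin n₁) k) (h₂ : Matrix (Fin n₂) (Fin n₂) k),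
      h₁.det = 1 ∧ h₂.det = 1 ∧
      P * h * P⁻¹ =
        Matrix.reindex (finSumFinEquiv.trans (finCongr hn)) (finSumFinEquiv.trans (finCongr hn))
          (Matrix.fromBlocks h₁ 0 0 h₂)

/-! For `u` coprime to `r`, the generator `gᵘ = diag(ξ^b₁, …, ξ^bₙ)` is conjugate to a block matrix,
so the characteristic polynomial of its first block divides that of `gᵘ`. Over an algebraically
closed field the eigenvalues of that block are then `ξ^bᵢ` for `i` in a set `S` of `n₁` indices,
and its determinant being `1` gives `r ∣ ∑_{i ∈ S} bᵢ`. When no `bᵢ` vanishes this partial sum is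
at least `r`, and the `n₂ ≥ 1` indices outside `S` add a positive amount to it. -/

open Polynomial

theorem Multiset.exists_le_map_eq_of_le_map {α β : Type*} [DecidableEq β] {f : α → β}
    {s : Multiset α} {μ : Multiset β} (h : μ ≤ s.map f) : ∃ t ≤ s, t.map f = μ := by
  induction s using Multiset.induction generalizing μ with
  | empty =>
    simp only [Multiset.map_zero, Multiset.le_zero] at h
    exact ⟨0, le_rfl, by rw [h, Multiset.map_zero]⟩
  | cons a s ih =>
    rw [Multiset.map_cons] at h
    by_cases ha : f a ∈ μ
    · have hle : μ.erase (f a) ≤ s.map f := by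
        simpa using Multiset.erase_le_erase (f a) h
      obtain ⟨t, ht, hmap⟩ := ih hle
      exact ⟨a ::ₘ t, Multiset.cons_le_cons a ht, by
        rw [Multiset.map_cons, hmap, Multiset.cons_erase ha]⟩
    · obtain ⟨t, ht, rfl⟩ := ih ((Multiset.le_cons_of_notMem ha).mp h)
      exact ⟨t, ht.trans (Multiset.le_cons_self s a), rfl⟩

theorem Finset.exists_map_val_eq_of_le_map_univ {ι β : Type*} [Fintype ι] [DecidableEq β]
    {f : ι → β} {μ : Multiset β} (h : μ ≤ univ.val.map f) :
    ∃ s : Finset ι, s.val.map f = μ := by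
  obtain ⟨t, ht, rfl⟩ := Multiset.exists_le_map_eq_of_le_map h
  exact ⟨⟨t, Multiset.nodup_of_le ht univ.nodup⟩, rfl⟩

namespace Matrix

variable {ι m₁ m₂ : Type*} [Fintype ι] [DecidableEq ι] [Fintype m₁] [DecidableEq m₁]
  [Fintype m₂] [DecidableEq m₂]

theorem charpoly_dvd_of_conj_eq_fromBlocks {R : Type*} [CommRing R] {P M : Matrix ι ι R}
    (hP : IsUnit P) (e : m₁ ⊕ m₂ ≃ ι) {h₁ : Matrix m₁ m₁ R} {h₂ : Matrix m₂ m₂ R}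
    (h : P * M * P⁻¹ = reindex e e (fromBlocks h₁ 0 0 h₂)) :
    h₁.charpoly ∣ M.charpoly := by
  have hM : M.charpoly = h₁.charpoly * h₂.charpoly := by
    rw [← charpoly_units_conj hP.unit M, IsUnit.unit_spec, h, charpoly_reindex,
      charpoly_fromBlocks_zero₂₁]
  exact ⟨_, hM⟩

theorem roots_charpoly_diagonal {K : Type*} [Field K] (d : ι → K) :
    (diagonal d).charpoly.roots = univ.val.map d := by
  have hroots := roots_multiset_prod_X_sub_C (univ.val.map d)
  rw [Multiset.map_map] at hroots
  rwa [charpoly_diagonal, prod_eq_multiset_prod]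

variable {K : Type*} [Field K] [IsAlgClosed K]

theorem card_roots_charpoly (A : Matrix m₁ m₁ K) :
    Multiset.card A.charpoly.roots = Fintype.card m₁ := by
  rw [splits_iff_card_roots.mp (IsAlgClosed.splits A.charpoly), charpoly_natDegree_eq_dim]

theorem exists_det_eq_prod_of_charpoly_dvd_charpoly_diagonal {d : ι → K}
    {A : Matrix m₁ m₁ K} (h : A.charpoly ∣ (diagonal d).charpoly) :
    ∃ s : Finset ι, s.card = Fintype.card m₁ ∧ A.det = ∏ i ∈ s, d i := by
  classical
  have hle : A.charpoly.roots ≤ univ.val.map d := by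
    rw [← roots_charpoly_diagonal]
    exact roots.le_of_dvd (charpoly_monic _).ne_zero h
  obtain ⟨s, hs⟩ := exists_map_val_eq_of_le_map_univ hle
  refine ⟨s, ?_, ?_⟩
  · rw [← card_roots_charpoly A, ← hs, Multiset.card_map, card_val]
  · rw [det_eq_prod_roots_charpoly, ← hs, prod_eq_multiset_prod]

theorem exists_prod_eq_one_of_conj_diagonal_eq_fromBlocks {P : Matrix ι ι K} (hP : IsUnit P)
    {d : ι → K} (e : m₁ ⊕ m₂ ≃ ι) {h₁ : Matrix m₁ m₁ K} {h₂ : Matrix m₂ m₂ K}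
    (h : P * diagonal d * P⁻¹ = reindex e e (fromBlocks h₁ 0 0 h₂)) (hdet : h₁.det = 1) :
    ∃ s : Finset ι, s.card = Fintype.card m₁ ∧ ∏ i ∈ s, d i = 1 := by
  obtain ⟨s, hcard, hprod⟩ := exists_det_eq_prod_of_charpoly_dvd_charpoly_diagonal
    (charpoly_dvd_of_conj_eq_fromBlocks hP e h)
  exact ⟨s, hcard, hprod ▸ hdet⟩

end Matrix

theorem Finset.lt_sum_of_dvd_sum_of_pos {ι : Type*} [Fintype ι] [DecidableEq ι] {b : ι → ℕ}
    (hb : ∀ i, 0 < b i) {s : Finset ι} (hs : s.Nonempty) (hsc : sᶜ.Nonempty) {r : ℕ}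
    (hdvd : r ∣ ∑ i ∈ s, b i) : r < ∑ i, b i := by
  have hr : r ≤ ∑ i ∈ s, b i := Nat.le_of_dvd (sum_pos (fun i _ => hb i) hs) hdvd
  have hc : 0 < ∑ i ∈ sᶜ, b i := sum_pos (fun i _ => hb i) hsc
  rw [← sum_add_sum_compl s b]
  omega

theorem IsPrimitiveRoot.diagonal_pow_eq_diagonal_pow_mod {R ι : Type*} [CommSemiring R] [Fintype ι]
    [DecidableEq ι] {ξ : R} {r : ℕ} (hξ : IsPrimitiveRoot ξ r) (a : ι → ℕ) (u : ℕ) :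
    (diagonal fun i => ξ ^ a i) ^ u = diagonal fun i => ξ ^ ((u * a i) % r) := by
  rw [diagonal_pow]
  congr 1
  funext i
  rw [Pi.pow_apply, ← pow_mul, hξ.eq_orderOf, pow_mod_orderOf, mul_comm]

theorem embedsIntoProdSL_cyclic_zero_exponent_or_large_sum_general
    (k : Type) [Field k] [IsAlgClosed k]
    {n : ℕ} {r : ℕ} (hr : 2 ≤ r) (ξ : k) (hξ : IsPrimitiveRoot ξ r)
    (a : Fin n → ℕ)
    (n₁ n₂ : ℕ) (hn₁ : 1 ≤ n₁) (hn₂ : 1 ≤ n₂) (hn : n₁ + n₂ = n)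
    (hemb : EmbedsIntoProdSL k n₁ n₂ hn
      {A | ∃ m : ℕ, A = (Matrix.diagonal fun i => ξ ^ a i) ^ m}) :
    (∃ i, r ∣ a i) ∨
      ((∀ i, ¬ r ∣ a i) ∧ ∀ u : ℕ, Nat.gcd u r = 1 →
        (∀ i, 0 < (u * a i) % r ∧ (u * a i) % r < r) ∧ r < ∑ i, (u * a i) % r) := by
  by_cases hz : ∃ i, r ∣ a i
  · exact Or.inl hz
  push Not at hz
  refine Or.inr ⟨hz, fun u hu => ?_⟩
  have hb : ∀ i, 0 < (u * a i) % r := fun i => Nat.pos_of_ne_zero fun h =>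
    hz i ((Nat.Coprime.symm hu).dvd_mul_left.mp (Nat.dvd_of_mod_eq_zero h))
  refine ⟨fun i => ⟨hb i, Nat.mod_lt _ (by omega)⟩, ?_⟩
  obtain ⟨P, hP, hblock⟩ := hemb
  obtain ⟨h₁, h₂, hdet₁, -, hconj⟩ := hblock _ ⟨u, rfl⟩
  rw [hξ.diagonal_pow_eq_diagonal_pow_mod] at hconj
  obtain ⟨s, hcard, hprod⟩ :=
    Matrix.exists_prod_eq_one_of_conj_diagonal_eq_fromBlocks hP _ hconj hdet₁
  rw [prod_pow_eq_pow_sum] at hprod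
  rw [Fintype.card_fin] at hcard
  have hs : s.Nonempty := card_pos.mp (by omega)
  have hsc : sᶜ.Nonempty := card_pos.mp (by rw [card_compl, Fintype.card_fin]; omega)
  exact lt_sum_of_dvd_sum_of_pos hb hs hsc (hξ.dvd_of_pow_eq_one _ hprod)

/-- If the cyclic group `G = ⟨(1/r)(a₁, …, aₙ)⟩ < SL(n, k)` embeds into
`SL(n₁, k) × SL(n₂, k)`, then either some generator of `G` has a zero exponent
(i.e. `r ∣ aᵢ` for some `i`), or no exponent is zero and for every generator `gᵘ`
(`gcd(u, r) = 1`) the exponents `bᵢ = (u * aᵢ) % r` satisfy `0 < bᵢ < r` and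
`b₁ + ⋯ + bₙ > r`. -/
theorem embedsIntoProdSL_cyclic_zero_exponent_or_large_sum
    (k : Type) [Field k] [IsAlgClosed k] [CharZero k]
    {n : ℕ} {r : ℕ} (hr : 2 ≤ r) (ξ : k) (hξ : IsPrimitiveRoot ξ r)
    (a : Fin n → ℕ)
    (hdet : r ∣ ∑ i, a i)
    (horder : Nat.gcd r (Finset.univ.gcd a) = 1)
    (n₁ n₂ : ℕ) (hn₁ : 1 ≤ n₁) (hn₂ : 1 ≤ n₂) (hn : n₁ + n₂ = n)
    (hemb : EmbedsIntoProdSL k n₁ n₂ hn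
      {A | ∃ m : ℕ, A = (Matrix.diagonal fun i => ξ ^ a i) ^ m}) :
    (∃ i, r ∣ a i) ∨
      ((∀ i, ¬ r ∣ a i) ∧ ∀ u : ℕ, Nat.gcd u r = 1 →
        (∀ i, 0 < (u * a i) % r ∧ (u * a i) % r < r) ∧ r < ∑ i, (u * a i) % r) :=
  embedsIntoProdSL_cyclic_zero_exponent_or_large_sum_general k hr ξ hξ a n₁ n₂ hn₁ hn₂ hn hemb
end

section
/- Let r ≥ 1 and n ≥ 2 be integers and let a : Fin n → ℤ/rℤ satisfy aᵢ ≠ 0 for all i and a₁ + ⋯ + aₙ = 0 in ℤ/rℤ. Suppose there exists a subset S ⊆ {1,…,n} with S nonempty and S ≠ {1,…,n} such that Σ_{i∈S} aᵢ = 0 in ℤ/rℤ. Then for every unit u of ℤ/rℤ one has Σᵢ val(u·aᵢ) > r, where val(x) ∈ {0,1,…,r−1} denotes the canonical representative of x ∈ ℤ/rℤ. -/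
lemma aux_sum_val_ge {r : ℕ} [NeZero r] {ι : Type*} (T : Finset ι) (hT : T.Nonempty)
    (b : ι → ZMod r) (hb : ∀ i ∈ T, b i ≠ 0) (h : ∑ i ∈ T, b i = 0) :
    r ≤ ∑ i ∈ T, (b i).val := by
  have hdvd : r ∣ ∑ i ∈ T, (b i).val := by
    have : ((∑ i ∈ T, (b i).val : ℕ) : ZMod r) = 0 := by
      push_cast [ZMod.natCast_val, ZMod.cast_id]
      exact h
    exact (ZMod.natCast_eq_zero_iff _ _).mp this
  have hpos : 0 < ∑ i ∈ T, (b i).val := by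
    obtain ⟨i, hi⟩ := hT
    have : 0 < (b i).val := Nat.pos_of_ne_zero fun h0 => hb i hi (by
      rwa [ZMod.val_eq_zero] at h0)
    exact lt_of_lt_of_le this (Finset.single_le_sum (f := fun i => (b i).val) (fun j _ => Nat.zero_le _) hi)
  exact Nat.le_of_dvd hpos hdvd

/-- Let `r ≥ 1`, `n ≥ 2` and `a : Fin n → ZMod r` with `aᵢ ≠ 0` for all `i` and
`∑ aᵢ = 0`. If some nonempty proper subset `S` of the indices satisfies `∑_{i ∈ S} aᵢ = 0`,
then for every unit `u` of `ZMod r` we have `∑ᵢ val (u * aᵢ) > r`, where `val x` is the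
canonical representative in `{0, …, r - 1}` of `x : ZMod r`. -/
theorem sum_val_unit_mul_gt_of_exists_partial_sum_eq_zero
    {r n : ℕ} (hr : 1 ≤ r) (hn : 2 ≤ n) (a : Fin n → ZMod r)
    (ha : ∀ i, a i ≠ 0) (hsum : ∑ i, a i = 0)
    (S : Finset (Fin n)) (hS : S.Nonempty) (hS' : S ≠ Finset.univ)
    (hSsum : ∑ i ∈ S, a i = 0) :
    ∀ u : (ZMod r)ˣ, r < ∑ i, ((u : ZMod r) * a i).val := by
  intro u
  have : NeZero r := ⟨by omega⟩
  set b : Fin n → ZMod r := fun i => (u : ZMod r) * a i with hb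
  have hbne : ∀ i, b i ≠ 0 := fun i h0 => ha i (by
    have := congrArg (fun x => ((u⁻¹ : (ZMod r)ˣ) : ZMod r) * x) h0
    simpa [hb, ← mul_assoc] using this)
  have hScsum : ∑ i ∈ Sᶜ, b i = 0 := by
    have h1 : ∑ i ∈ S, b i + ∑ i ∈ Sᶜ, b i = ∑ i, b i :=
      Finset.sum_add_sum_compl S b
    have h2 : ∑ i ∈ S, b i = 0 := by
      rw [hb, ← Finset.mul_sum, hSsum, mul_zero]
    have h3 : ∑ i, b i = 0 := by
      rw [hb, ← Finset.mul_sum, hsum, mul_zero]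
    rw [h2, h3, zero_add] at h1
    exact h1
  have hSsum' : ∑ i ∈ S, b i = 0 := by
    rw [hb, ← Finset.mul_sum, hSsum, mul_zero]
  have hSc : Sᶜ.Nonempty := by
    rw [← Finset.card_pos, Finset.card_compl]
    have : S.card < Finset.univ.card := Finset.card_lt_card (Finset.lt_iff_ssubset.mp
      (lt_of_le_of_ne (Finset.le_iff_subset.mpr (Finset.subset_univ S)) hS'))
    simp only [Finset.card_univ, Fintype.card_fin] at this ⊢
    omega
  have h1 : r ≤ ∑ i ∈ S, (b i).val := aux_sum_val_ge S hS b (fun i _ => hbne i) hSsum'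
  have h2 : r ≤ ∑ i ∈ Sᶜ, (b i).val := aux_sum_val_ge Sᶜ hSc b (fun i _ => hbne i) hScsum
  have h3 : ∑ i ∈ S, (b i).val + ∑ i ∈ Sᶜ, (b i).val = ∑ i, (b i).val :=
    Finset.sum_add_sum_compl S _
  have h4 : ∑ i, (b i).val = ∑ i, ((u : ZMod r) * a i).val := rfl
  omega
end
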